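/- arXiv:1604.07381 — 3 statements merged into one kernel-verified Lean document; each statement's English description precedes it below -/
import Mathlib

section
/- Let m ≥ 2, n ≥ 1, x₁, …, x_m ∈ (0,1), and x̄ = (x₁ + ⋯ + x_m)/m. If X₍₁₎, …, X₍ₘ₎ are independent with X₍ᵢ₎ ∼ B(n, x_i), then X₍₁₎ + ⋯ + X₍ₘ₎ ≤_cx S*, where S* ∼ B(mn, x̄): for every convex f : ℝ → ℝ, E f(X₍₁₎+⋯+X₍ₘ₎) ≤ ∑_{k=0}^{mn} C(mn,k)·x̄^k·(1−x̄)^{mn−k}·f(k). -/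
open Finset MeasureTheory ProbabilityTheory

/-- The binomial distribution `B(n,p)` as a measure on `ℝ`. -/
noncomputable def binMeasure (n : ℕ) (p : ℝ) : Measure ℝ :=
  ∑ k ∈ range (n + 1),
    ENNReal.ofReal ((n.choose k : ℝ) * p ^ k * (1 - p) ^ (n - k)) • Measure.dirac (k : ℝ)

/-!
Write each `X₍ᵢ₎` as a sum of `n` independent Bernoulli(`xᵢ`) variables, so that `∑ X₍ᵢ₎` is a
sum `S` of `mn` independent Bernoulli variables whose parameters have mean `x̄`. With `p + q` and
the other parameters fixed, `𝔼 f(S)` is affine in the product `pq` of two parameters `p, q`, with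
slope an average of second differences of `f`, hence nonnegative. So replacing `(p, q)` by
`(x̄, p + q - x̄)`, where `p ≤ x̄ ≤ q`, does not decrease `𝔼 f(S)` and fixes one more parameter
at `x̄`; after at most `mn` steps all parameters equal `x̄` and `S ∼ B(mn, x̄)` (Hoeffding).
-/

open scoped ENNReal

def DiscreteConvex (g : ℕ → ℝ) : Prop := ∀ k, 2 * g (k + 1) ≤ g k + g (k + 2)

lemma DiscreteConvex.comp_add_one {g : ℕ → ℝ} (hg : DiscreteConvex g) :
    DiscreteConvex (fun k => g (k + 1)) :=
  fun k => hg (k + 1)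

lemma ConvexOn.discreteConvex_natCast {f : ℝ → ℝ} (hf : ConvexOn ℝ Set.univ f) :
    DiscreteConvex (fun k : ℕ => f k) := by
  intro k
  have h := hf.2 (Set.mem_univ (k : ℝ)) (Set.mem_univ ((k : ℝ) + 2))
    (by norm_num : (0 : ℝ) ≤ 1 / 2) (by norm_num : (0 : ℝ) ≤ 1 / 2) (by norm_num)
  have hmid : (1 / 2 : ℝ) • (k : ℝ) + (1 / 2 : ℝ) • ((k : ℝ) + 2) = k + 1 := by
    simp only [smul_eq_mul]; ring
  rw [hmid, smul_eq_mul, smul_eq_mul] at h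
  push_cast
  linarith

noncomputable def binomialWeight (n : ℕ) (p : ℝ) (k : ℕ) : ℝ :=
  n.choose k * p ^ k * (1 - p) ^ (n - k)

lemma binomialWeight_nonneg (n : ℕ) {p : ℝ} (hp : p ∈ Set.Icc (0 : ℝ) 1) (k : ℕ) :
    0 ≤ binomialWeight n p k :=
  mul_nonneg (mul_nonneg (Nat.cast_nonneg _) (pow_nonneg hp.1 _)) (pow_nonneg (sub_nonneg.2 hp.2) _)

namespace PoissonBinomial

/-- `expect l g` is `𝔼 g(B₁ + ⋯ + Bₖ)` for independent Bernoulli variables `Bᵢ` whose parameters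
are the entries of `l`. -/
noncomputable def expect : List ℝ → (ℕ → ℝ) → ℝ
  | [], g => g 0
  | p :: l, g => (1 - p) * expect l g + p * expect l (fun k => g (k + 1))

@[simp] lemma expect_nil (g : ℕ → ℝ) : expect [] g = g 0 := rfl

@[simp] lemma expect_cons (p : ℝ) (l : List ℝ) (g : ℕ → ℝ) :
    expect (p :: l) g = (1 - p) * expect l g + p * expect l (fun k => g (k + 1)) := rfl

lemma expect_perm {l₁ l₂ : List ℝ} (h : l₁.Perm l₂) (g : ℕ → ℝ) : expect l₁ g = expect l₂ g := by
  induction h generalizing g with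
  | nil => rfl
  | cons p _ ih => simp [ih]
  | swap p p' l => simp only [expect_cons]; ring
  | trans _ _ ih₁ ih₂ => rw [ih₁, ih₂]

lemma expect_append (l₁ l₂ : List ℝ) (g : ℕ → ℝ) :
    expect (l₁ ++ l₂) g = expect l₁ (fun a => expect l₂ (fun b => g (a + b))) := by
  induction l₁ generalizing g with
  | nil => simp
  | cons p l₁ ih => simp [ih, add_right_comm]

lemma expect_replicate (n : ℕ) (p : ℝ) (g : ℕ → ℝ) :
    expect (List.replicate n p) g = ∑ k ∈ range (n + 1), binomialWeight n p k * g k := by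
  induction n generalizing g with
  | zero => simp [binomialWeight]
  | succ n ih =>
    rw [List.replicate_succ, expect_cons, ih, ih, mul_sum, mul_sum]
    refine .trans ?_ ((sum_choose_succ_mul (fun i j => p ^ i * (1 - p) ^ j * g i) n).symm.trans
      (sum_congr rfl fun _ _ => by unfold binomialWeight; ring))
    congr 1
    · refine sum_congr rfl fun i hi => ?_
      rw [binomialWeight, Nat.sub_add_comm (mem_range_succ_iff.1 hi), pow_succ]
      ring
    · exact sum_congr rfl fun i _ => by unfold binomialWeight; ring

lemma sum_prod_binomialWeight_mul_eq_expect (n : ℕ) {m : ℕ} (x : Fin m → ℝ) (g : ℕ → ℝ) :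
    ∑ k : Fin m → Fin (n + 1), (∏ i, binomialWeight n (x i) (k i)) * g (∑ i, (k i : ℕ))
      = expect ((List.ofFn x).flatMap (List.replicate n)) g := by
  induction m generalizing g with
  | zero => simp
  | succ m ih =>
    rw [← (Fin.consEquiv fun _ => Fin (n + 1)).sum_comp, Fintype.sum_prod_type, List.ofFn_succ,
      List.flatMap_cons, expect_append, expect_replicate, sum_range]
    refine sum_congr rfl fun j _ => ?_
    simp only [Fin.consEquiv_apply, Fin.prod_univ_succ, Fin.sum_univ_succ, Fin.cons_zero,
      Fin.cons_succ, mul_assoc, ← mul_sum]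
    rw [ih _ fun b => g (j + b)]

lemma expect_secondDiff_nonneg {l : List ℝ} (hl : ∀ p ∈ l, p ∈ Set.Icc (0 : ℝ) 1) {g : ℕ → ℝ}
    (hg : DiscreteConvex g) :
    0 ≤ expect l g - 2 * expect l (fun k => g (k + 1)) + expect l (fun k => g (k + 2)) := by
  induction l generalizing g with
  | nil => simp only [expect_nil]; linarith [hg 0]
  | cons p l ih =>
    obtain ⟨hp₀, hp₁⟩ := hl p List.mem_cons_self
    have hl' : ∀ q ∈ l, q ∈ Set.Icc (0 : ℝ) 1 := fun q hq => hl q (List.mem_cons_of_mem p hq)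
    have h₀ := ih hl' hg
    have h₁ := ih hl' hg.comp_add_one
    simp only [expect_cons]
    nlinarith [mul_nonneg (sub_nonneg.2 hp₁) h₀, mul_nonneg hp₀ h₁]

lemma expect_cons_cons_le {l : List ℝ} (hl : ∀ p ∈ l, p ∈ Set.Icc (0 : ℝ) 1) {a b a' b' : ℝ}
    (hsum : a + b = a' + b') (hprod : a * b ≤ a' * b') {g : ℕ → ℝ} (hg : DiscreteConvex g) :
    expect (a :: b :: l) g ≤ expect (a' :: b' :: l) g := by
  have key : ∀ u v : ℝ, expect (u :: v :: l) g
      = expect l g + (u + v) * (expect l (fun k => g (k + 1)) - expect l g)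
        + u * v * (expect l g - 2 * expect l (fun k => g (k + 1))
          + expect l (fun k => g (k + 2))) := by
    intro u v
    simp only [expect_cons]
    ring
  rw [key, key, hsum]
  nlinarith [expect_secondDiff_nonneg hl hg]

lemma exists_mem_mul_sub_nonpos {a q : ℝ} {t : List ℝ} (ht : t ≠ [])
    (hsum : (a :: t).sum = (a :: t).length * q) : ∃ b ∈ t, (a - q) * (b - q) ≤ 0 := by
  simp only [List.sum_cons, List.length_cons, Nat.cast_succ] at hsum
  have hle : (t.map fun b => (a - q) * b).sum ≤ (t.map fun _ => (a - q) * q).sum := by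
    rw [List.sum_map_mul_left, List.map_id', List.map_const', List.sum_replicate, nsmul_eq_mul,
      show t.sum = t.length * q + (q - a) by linarith]
    nlinarith [sq_nonneg (a - q)]
  obtain ⟨b, hb, hb_le⟩ := List.exists_le_of_sum_le ht _ _ hle
  exact ⟨b, hb, by linarith⟩

lemma exists_expect_le_expect_cons_of_sum_eq {a q : ℝ} {t : List ℝ} (ht : t ≠ [])
    (hl : ∀ p ∈ a :: t, p ∈ Set.Icc (0 : ℝ) 1) (hsum : (a :: t).sum = (a :: t).length * q) :
    q ∈ Set.Icc (0 : ℝ) 1 ∧ ∃ r : List ℝ, r.length = t.length ∧ r.sum = r.length * q ∧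
      (∀ p ∈ r, p ∈ Set.Icc (0 : ℝ) 1) ∧
      ∀ g, DiscreteConvex g → expect (a :: t) g ≤ expect (q :: r) g := by
  obtain ⟨b, hb, hab⟩ := exists_mem_mul_sub_nonpos ht hsum
  have hperm : t.Perm (b :: t.erase b) := List.perm_cons_erase hb
  have hlen : t.length = (t.erase b).length + 1 := by simpa using hperm.length_eq
  have herase : ∀ p ∈ t.erase b, p ∈ Set.Icc (0 : ℝ) 1 :=
    fun p hp => hl p (List.mem_cons_of_mem a (List.mem_of_mem_erase hp))
  obtain ⟨ha₀, ha₁⟩ := hl a List.mem_cons_self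
  obtain ⟨hb₀, hb₁⟩ := hl b (List.mem_cons_of_mem a hb)
  refine ⟨⟨by nlinarith, by nlinarith⟩, (a + b - q) :: t.erase b, ?_, ?_, ?_, fun g hg => ?_⟩
  · simp [hlen]
  · have := hperm.sum_eq
    simp only [List.sum_cons, List.length_cons, hlen, Nat.cast_succ] at hsum this ⊢
    linarith
  · exact List.forall_mem_cons.2 ⟨⟨by nlinarith, by nlinarith⟩, herase⟩
  · calc expect (a :: t) g = expect (a :: b :: t.erase b) g := expect_perm (hperm.cons a) g
      _ ≤ expect (q :: (a + b - q) :: t.erase b) g :=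
        expect_cons_cons_le herase (by ring) (by nlinarith) hg

theorem expect_le_expect_replicate {l : List ℝ} (hl : ∀ p ∈ l, p ∈ Set.Icc (0 : ℝ) 1) {q : ℝ}
    (hsum : l.sum = l.length * q) {g : ℕ → ℝ} (hg : DiscreteConvex g) :
    expect l g ≤ expect (List.replicate l.length q) g := by
  induction hN : l.length generalizing l g with
  | zero => rw [List.length_eq_zero_iff.1 hN]; rfl
  | succ N ih =>
    obtain ⟨a, t, rfl⟩ := List.exists_cons_of_length_eq_add_one hN
    rcases eq_or_ne t [] with rfl | ht
    · obtain rfl : a = q := by simpa using hsum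
      obtain rfl : N = 0 := by simpa using hN
      rfl
    obtain ⟨⟨hq₀, hq₁⟩, r, hrlen, hrsum, hr, hstep⟩ :=
      exists_expect_le_expect_cons_of_sum_eq ht hl hsum
    replace hrlen : r.length = N := by simpa [hrlen] using hN
    calc expect (a :: t) g ≤ expect (q :: r) g := hstep g hg
      _ ≤ expect (q :: List.replicate N q) g := by
        simp only [expect_cons]
        gcongr
        exacts [ih hr hrsum hg hrlen, ih hr hrsum hg.comp_add_one hrlen]
      _ = expect (List.replicate (N + 1) q) g := rfl

end PoissonBinomial

open PoissonBinomial

lemma MeasureTheory.Measure.pi_sum_smul_dirac {ι κ α : Type*} [Fintype ι] [DecidableEq ι]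
    [Fintype κ] [MeasurableSpace α] {w : ι → κ → ℝ≥0∞} (hw : ∀ i j, w i j ≠ ∞)
    (a : ι → κ → α) :
    Measure.pi (fun i => ∑ j, w i j • Measure.dirac (a i j))
      = ∑ k : ι → κ, (∏ i, w i (k i)) • Measure.dirac (fun i => a i (k i)) := by
  have : ∀ i, IsFiniteMeasure (∑ j, w i j • Measure.dirac (a i j)) := fun i =>
    ⟨by simp [ENNReal.sum_lt_top, (hw _ _).lt_top]⟩
  refine Measure.pi_eq fun s hs => ?_
  simp only [Measure.coe_finsetSum, Measure.coe_smul, Finset.sum_apply, Pi.smul_apply,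
    smul_eq_mul, Measure.dirac_apply' _ (hs _), Measure.dirac_apply' _ (MeasurableSet.univ_pi hs)]
  rw [Fintype.prod_sum]
  refine Finset.sum_congr rfl fun k _ => ?_
  rw [prod_mul_distrib, ← Finset.coe_univ, Set.indicator_pi_one_apply]

lemma MeasureTheory.integral_sum_smul_dirac {ι X : Type*} [Fintype ι] [MeasurableSpace X]
    [MeasurableSingletonClass X] {c : ι → ℝ≥0∞} (hc : ∀ i, c i ≠ ∞) (x : ι → X) (f : X → ℝ) :
    ∫ y, f y ∂(∑ i, c i • Measure.dirac (x i)) = ∑ i, (c i).toReal * f (x i) := by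
  rw [← Measure.sum_fintype, integral_sum_dirac hc, tsum_fintype]
  rfl

lemma binMeasure_eq_sum_fin (n : ℕ) (p : ℝ) :
    binMeasure n p = ∑ j : Fin (n + 1),
      ENNReal.ofReal (binomialWeight n p j) • Measure.dirac ((j : ℕ) : ℝ) := by
  rw [binMeasure, sum_range]
  rfl

theorem integral_comp_sum_eq_expect {Ω : Type*} [MeasurableSpace Ω] {μ : Measure Ω}
    [IsProbabilityMeasure μ] {m n : ℕ} {x : Fin m → ℝ} (hx : ∀ i, x i ∈ Set.Icc (0 : ℝ) 1)
    {X : Fin m → Ω → ℝ} (hmeas : ∀ i, Measurable (X i)) (hindep : iIndepFun X μ)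
    (hdist : ∀ i, μ.map (X i) = binMeasure n (x i)) {f : ℝ → ℝ} (hf : Measurable f) :
    ∫ ω, f (∑ i, X i ω) ∂μ = expect ((List.ofFn x).flatMap (List.replicate n)) (fun k => f k) := by
  have hlaw : μ.map (fun ω i => X i ω) = ∑ k : Fin m → Fin (n + 1),
      (∏ i, ENNReal.ofReal (binomialWeight n (x i) (k i))) •
        Measure.dirac (fun i => ((k i : ℕ) : ℝ)) := by
    rw [(iIndepFun_iff_map_fun_eq_pi_map fun i => (hmeas i).aemeasurable).1 hindep]
    simp_rw [hdist, binMeasure_eq_sum_fin]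
    exact Measure.pi_sum_smul_dirac (fun _ _ => ENNReal.ofReal_ne_top) _
  rw [← integral_map (f := fun y : Fin m → ℝ => f (∑ i, y i))
      (measurable_pi_lambda _ hmeas).aemeasurable (hf.comp (by fun_prop)).aestronglyMeasurable,
    hlaw, integral_sum_smul_dirac (fun _ => ENNReal.prod_ne_top fun _ _ => ENNReal.ofReal_ne_top),
    ← sum_prod_binomialWeight_mul_eq_expect]
  refine Finset.sum_congr rfl fun k _ => ?_
  simp_rw [ENNReal.toReal_prod, ENNReal.toReal_ofReal (binomialWeight_nonneg n (hx _) _)]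
  push_cast
  rfl

theorem sum_binomials_cx_binomial_mean_general {Ω : Type*} [MeasurableSpace Ω]
    (μ : Measure Ω) [IsProbabilityMeasure μ] (m n : ℕ)
    (x : Fin m → ℝ) (hx : ∀ i, x i ∈ Set.Ioo (0:ℝ) 1)
    (X : Fin m → Ω → ℝ) (hmeas : ∀ i, Measurable (X i))
    (hindep : iIndepFun X μ)
    (hdist : ∀ i, μ.map (X i) = binMeasure n (x i))
    (f : ℝ → ℝ) (hf : ConvexOn ℝ Set.univ f) :
    ∫ ω, f (∑ i, X i ω) ∂μ
      ≤ ∑ k ∈ range (m * n + 1),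
          ((m * n).choose k : ℝ) * ((∑ i, x i) / m) ^ k *
            (1 - (∑ i, x i) / m) ^ (m * n - k) * f k := by
  have hx01 : ∀ i, x i ∈ Set.Icc (0 : ℝ) 1 := fun i => Set.Ioo_subset_Icc_self (hx i)
  set l := (List.ofFn x).flatMap (List.replicate n)
  have hl : ∀ p ∈ l, p ∈ Set.Icc (0 : ℝ) 1 := by
    simp only [l, List.mem_flatMap, List.mem_ofFn, List.mem_replicate]
    rintro p ⟨_, ⟨i, rfl⟩, -, rfl⟩
    exact hx01 i
  have hlen : l.length = m * n := by simp [l, Function.comp_def]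
  have hsum : l.sum = l.length * ((∑ i, x i) / m) := by
    rw [hlen]
    obtain rfl | hm := Nat.eq_zero_or_pos m
    · simp [l]
    · simp [l, List.flatMap_def, List.sum_flatten, List.sum_ofFn, Function.comp_def,
        ← Finset.mul_sum]
      field_simp
  have hfm : Measurable f := (continuousOn_univ.1 (hf.continuousOn isOpen_univ)).measurable
  calc ∫ ω, f (∑ i, X i ω) ∂μ = expect l (fun k => f k) :=
        integral_comp_sum_eq_expect hx01 hmeas hindep hdist hfm
    _ ≤ expect (List.replicate l.length ((∑ i, x i) / m)) (fun k => f k) :=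
      expect_le_expect_replicate hl hsum hf.discreteConvex_natCast
    _ = _ := by rw [hlen, expect_replicate]; rfl

/-- Proposition 3 (i): a sum of `m` independent `B(n, xᵢ)` variables is
dominated in the convex order by `B(mn, x̄)`. -/
theorem sum_binomials_cx_binomial_mean {Ω : Type*} [MeasurableSpace Ω]
    (μ : Measure Ω) [IsProbabilityMeasure μ] (m n : ℕ) (hm : 2 ≤ m) (hn : 1 ≤ n)
    (x : Fin m → ℝ) (hx : ∀ i, x i ∈ Set.Ioo (0:ℝ) 1)
    (X : Fin m → Ω → ℝ) (hmeas : ∀ i, Measurable (X i))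
    (hindep : iIndepFun X μ)
    (hdist : ∀ i, μ.map (X i) = binMeasure n (x i))
    (f : ℝ → ℝ) (hf : ConvexOn ℝ Set.univ f) :
    ∫ ω, f (∑ i, X i ω) ∂μ
      ≤ ∑ k ∈ range (m * n + 1),
          ((m * n).choose k : ℝ) * ((∑ i, x i) / m) ^ k *
            (1 - (∑ i, x i) / m) ^ (m * n - k) * f k :=
  sum_binomials_cx_binomial_mean_general μ m n x hx X hmeas hindep hdist f hf
end

section
/- Let m ≥ 2, n ≥ 1, x₁, …, x_m ∈ (0,1), and x̄ = (x₁ + ⋯ + x_m)/m. Then for every convex f : ℝ → ℝ, ∑_{k=0}^{mn} C(mn,k)·x̄^k·(1−x̄)^{mn−k}·f(k) ≤ (1/m)·∑_{i=1}^{m} ∑_{k=0}^{mn} C(mn,k)·x_i^k·(1−x_i)^{mn−k}·f(k). That is, B(mn, x̄) ≤_cx the mixture (1/m)·∑_{i=1}^m B(mn, x_i). -/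
/-!
The derivative of `bernsteinSum g (N + 1)` is `(N + 1) • bernsteinSum (Δg) N`, so on `[0, 1]`
the Bernstein sum of a nonnegative sequence is nonnegative, that of a monotone sequence is monotone,
and that of a convex sequence is convex. For convex `f`, the map `p ↦ 𝔼 f(Bin(N, p))` is
therefore convex on `[0, 1]`, and the inequality is Jensen's inequality for it at the points `xᵢ`
with equal weights.
-/

open Finset Polynomial

/-- Evaluated at `p ∈ [0, 1]`, this is `𝔼 g(X)` for `X ∼ Bin(N, p)`. -/
noncomputable def bernsteinSum (g : ℕ → ℝ) (N : ℕ) : ℝ[X] :=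
  ∑ k ∈ range (N + 1), g k • bernsteinPolynomial ℝ N k

theorem eval_bernsteinPolynomial (N k : ℕ) (p : ℝ) :
    (bernsteinPolynomial ℝ N k).eval p = (N.choose k : ℝ) * p ^ k * (1 - p) ^ (N - k) := by
  simp [bernsteinPolynomial]

theorem eval_bernsteinSum (g : ℕ → ℝ) (N : ℕ) (p : ℝ) :
    (bernsteinSum g N).eval p =
      ∑ k ∈ range (N + 1), (N.choose k : ℝ) * p ^ k * (1 - p) ^ (N - k) * g k := by
  simp only [bernsteinSum, eval_finsetSum, eval_smul, eval_bernsteinPolynomial, smul_eq_mul]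
  exact sum_congr rfl fun k _ => mul_comm _ _

theorem derivative_bernsteinSum (g : ℕ → ℝ) (N : ℕ) :
    derivative (bernsteinSum g (N + 1)) = (N + 1 : ℝ[X]) * bernsteinSum (fwdDiff 1 g) N := by
  have htop : bernsteinPolynomial ℝ N (N + 1) = 0 := bernsteinPolynomial.eq_zero_of_lt ℝ (by omega)
  have hshift : ∑ k ∈ range (N + 1), g (k + 1) • bernsteinPolynomial ℝ N (k + 1) +
      g 0 • bernsteinPolynomial ℝ N 0 = ∑ k ∈ range (N + 1), g k • bernsteinPolynomial ℝ N k := by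
    rw [← sum_range_succ' (fun k => g k • bernsteinPolynomial ℝ N k), sum_range_succ, htop,
      smul_zero, add_zero]
  have hcomm (a : ℝ) (P : ℝ[X]) : a • ((N + 1 : ℝ[X]) * P) = (N + 1) * (a • P) := by
    simp only [smul_eq_C_mul]; ring
  simp only [bernsteinSum, derivative_sum, derivative_smul]
  rw [sum_range_succ', bernsteinPolynomial.derivative_zero]
  simp only [bernsteinPolynomial.derivative_succ_aux, Nat.add_sub_cancel, Nat.cast_add_one]
  simp only [neg_mul, smul_neg, hcomm, ← mul_sum, fwdDiff, sub_smul, sum_sub_distrib, smul_sub,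
    ← hshift]
  ring

theorem eval_bernsteinSum_nonneg {g : ℕ → ℝ} (hg : ∀ k, 0 ≤ g k) (N : ℕ) {p : ℝ}
    (hp : p ∈ Set.Icc (0 : ℝ) 1) : 0 ≤ (bernsteinSum g N).eval p := by
  have hp₀ : 0 ≤ p := hp.1
  have hp₁ : 0 ≤ 1 - p := sub_nonneg.2 hp.2
  rw [eval_bernsteinSum]
  exact sum_nonneg fun k _ => mul_nonneg (by positivity) (hg k)

theorem monotoneOn_eval_bernsteinSum {g : ℕ → ℝ} (hg : Monotone g) (N : ℕ) :
    MonotoneOn (fun p => (bernsteinSum g N).eval p) (Set.Icc 0 1) := by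
  refine monotoneOn_of_deriv_nonneg (convex_Icc 0 1) (Polynomial.continuousOn _)
    (Polynomial.differentiableOn _) fun p hp => ?_
  rw [Polynomial.deriv]
  cases N with
  | zero => simp [bernsteinSum, bernsteinPolynomial]
  | succ N =>
    rw [derivative_bernsteinSum, eval_mul]
    exact mul_nonneg (by simp only [eval_add, eval_natCast, eval_one]; positivity)
      (eval_bernsteinSum_nonneg (fun k => sub_nonneg.2 (hg k.le_succ)) N (interior_subset hp))

theorem convexOn_eval_bernsteinSum {g : ℕ → ℝ} (hg : Monotone (fwdDiff 1 g)) (N : ℕ) :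
    ConvexOn ℝ (Set.Icc 0 1) (fun p => (bernsteinSum g N).eval p) := by
  refine MonotoneOn.convexOn_of_deriv (convex_Icc 0 1) (Polynomial.continuousOn _)
    (Polynomial.differentiableOn _) ?_
  rw [show deriv (fun p => (bernsteinSum g N).eval p) =
      fun p => (derivative (bernsteinSum g N)).eval p from funext fun p => Polynomial.deriv _]
  cases N with
  | zero => simp [bernsteinSum, bernsteinPolynomial, monotoneOn_const]
  | succ N =>
    simp only [derivative_bernsteinSum, eval_mul, eval_add, eval_natCast, eval_one]
    intro a ha b hb hab
    exact mul_le_mul_of_nonneg_left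
      (monotoneOn_eval_bernsteinSum hg N (interior_subset ha) (interior_subset hb) hab)
      (by positivity)

theorem ConvexOn.monotone_fwdDiff_natCast {f : ℝ → ℝ} (hf : ConvexOn ℝ (Set.Ici 0) f) :
    Monotone (fwdDiff 1 fun k : ℕ => f k) := by
  refine monotone_nat_of_le_succ fun k => ?_
  have hslope := hf.slope_mono_adjacent (x := k) (y := k + 1) (z := k + 2)
    (by simp) (by simp only [Set.mem_Ici]; positivity) (by simp) (by simp)
  simp only [fwdDiff]
  push_cast
  convert hslope using 1 <;> ring_nf

theorem binomial_mean_cx_mixture_general (m n : ℕ) (hm : 2 ≤ m)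
    (x : Fin m → ℝ) (hx : ∀ i, x i ∈ Set.Ioo (0:ℝ) 1)
    (f : ℝ → ℝ) (hf : ConvexOn ℝ Set.univ f) :
    ∑ k ∈ range (m * n + 1),
        ((m * n).choose k : ℝ) * ((∑ i, x i) / m) ^ k *
          (1 - (∑ i, x i) / m) ^ (m * n - k) * f k
      ≤ (1 / m) * ∑ i, ∑ k ∈ range (m * n + 1),
          ((m * n).choose k : ℝ) * (x i) ^ k * (1 - x i) ^ (m * n - k) * f k := by
  have hm₀ : (m : ℝ) ≠ 0 := Nat.cast_ne_zero.2 (by omega)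
  have hconv := convexOn_eval_bernsteinSum
    (hf.subset (Set.subset_univ _) (convex_Ici 0)).monotone_fwdDiff_natCast (m * n)
  have jensen := hconv.map_sum_le (t := univ) (w := fun _ => 1 / (m : ℝ)) (p := x)
    (fun _ _ => by positivity) (by simp [hm₀]) (fun i _ => Set.Ioo_subset_Icc_self (hx i))
  simpa [eval_bernsteinSum, ← mul_sum, ← sum_div, div_eq_inv_mul] using jensen

/-- Proposition 3 (ii): `B(mn, x̄) ≤_cx (1/m) ∑ᵢ B(mn, xᵢ)`. -/
theorem binomial_mean_cx_mixture (m n : ℕ) (hm : 2 ≤ m) (hn : 1 ≤ n)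
    (x : Fin m → ℝ) (hx : ∀ i, x i ∈ Set.Ioo (0:ℝ) 1)
    (f : ℝ → ℝ) (hf : ConvexOn ℝ Set.univ f) :
    ∑ k ∈ range (m * n + 1),
        ((m * n).choose k : ℝ) * ((∑ i, x i) / m) ^ k *
          (1 - (∑ i, x i) / m) ^ (m * n - k) * f k
      ≤ (1 / m) * ∑ i, ∑ k ∈ range (m * n + 1),
          ((m * n).choose k : ℝ) * (x i) ^ k * (1 - x i) ^ (m * n - k) * f k :=
  binomial_mean_cx_mixture_general m n hm x hx f hf
end

section
/- Let m ≥ 2, n ≥ 1. For every convex continuous function f : [0,1] → ℝ and all x₁, …, x_m ∈ [0,1], ∑_{i₁,…,i_m = 0}^{n} (b_{n,i₁}(x₁)⋯b_{n,i_m}(x₁) + ⋯ + b_{n,i₁}(x_m)⋯b_{n,i_m}(x_m) − m·b_{n,i₁}(x₁)·b_{n,i₂}(x₂)⋯b_{n,i_m}(x_m)) · f((i₁+⋯+i_m)/(mn)) ≥ 0. -/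
open Finset

/-- Bernstein fundamental polynomial `b_{n,i}(x)`. -/
def bern (n i : ℕ) (x : ℝ) : ℝ := (n.choose i : ℝ) * x ^ i * (1 - x) ^ (n - i)

/-!
Put `g k = f (k / (m n))` and `E(y₁, …, y_m) = 𝔼 g(X₁ + ⋯ + X_m)` for independent
`X_l ∼ Bin(n, y_l)`; the sum in the theorem is `∑ⱼ E(xⱼ, …, xⱼ) - m E(x₁, …, x_m)`.
The partial sums `∑_{j ≤ k} b_{n,j}(x)` are decreasing in `x` and `g` is a convex sequence, so two
Abel summations give `2 E(a, b, w) ≤ E(a, a, w) + E(b, b, w)`. Hence `k ↦ E(aᵏ, bˢ⁻ᵏ, z)` is a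
convex sequence, which yields `s E(a, bˢ⁻¹, z) ≤ (s - 1) E(bˢ, z) + E(aˢ, z)`; an induction on the
number of arguments that are not yet fixed turns this into `m E(x) ≤ ∑ⱼ E(xⱼ, …, xⱼ)`.
-/

def DiscreteConvexOn (N : ℕ) (g : ℕ → ℝ) : Prop :=
  ∀ k, k + 2 ≤ N → 2 * g (k + 1) ≤ g k + g (k + 2)

namespace DiscreteConvexOn

lemma of_convexOn {f : ℝ → ℝ} (hf : ConvexOn ℝ (Set.Icc 0 1) f) (N : ℕ) :
    DiscreteConvexOn N fun k => f (k / N) := by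
  intro k hk
  have hN : (0 : ℝ) < N := by norm_cast; omega
  have mem : ∀ j : ℕ, j ≤ N → (j / N : ℝ) ∈ Set.Icc 0 1 := fun j hj =>
    ⟨by positivity, div_le_one_of_le₀ (by exact_mod_cast hj) hN.le⟩
  have hmid := hf.2 (mem k (by omega)) (mem (k + 2) hk) (by norm_num : (0 : ℝ) ≤ 1 / 2)
    (by norm_num : (0 : ℝ) ≤ 1 / 2) (by norm_num)
  simp only [smul_eq_mul] at hmid
  have : 1 / 2 * ((k : ℝ) / N) + 1 / 2 * (((k + 2 : ℕ) : ℝ) / N) = ((k + 1 : ℕ) : ℝ) / N := by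
    push_cast
    ring
  rw [this] at hmid
  linarith

lemma sum_mul_shift {N n : ℕ} {g : ℕ → ℝ} (hg : DiscreteConvexOn (N + n) g) {w : ℕ → ℝ}
    (hw : ∀ k, 0 ≤ w k) :
    DiscreteConvexOn N fun j => ∑ k ∈ range (n + 1), w k * g (j + k) := by
  intro j hj
  rw [mul_sum, ← sum_add_distrib]
  refine sum_le_sum fun k hk => ?_
  have := mul_le_mul_of_nonneg_left (hg (j + k) (by simp only [mem_range] at hk; omega)) (hw k)
  simp only [add_right_comm j _ k]
  linarith

lemma succ_mul_le {t : ℕ} {u : ℕ → ℝ} (hu : DiscreteConvexOn (t + 1) u) :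
    (t + 1) * u 1 ≤ t * u 0 + u (t + 1) := by
  have hslope : ∀ k ≤ t, u 1 - u 0 ≤ u (k + 1) - u k := by
    intro k hk
    induction k with
    | zero => rfl
    | succ k ih =>
      have := hu k (by omega)
      linarith [ih (by omega)]
  have := card_nsmul_le_sum (range (t + 1)) (fun k => u (k + 1) - u k) (u 1 - u 0)
    fun k hk => hslope k (Nat.lt_succ_iff.1 (mem_range.1 hk))
  rw [sum_range_sub, card_range, nsmul_eq_mul, Nat.cast_succ] at this
  linarith

end DiscreteConvexOn

lemma bern_eq_eval (n i : ℕ) (x : ℝ) : bern n i x = (bernsteinPolynomial ℝ n i).eval x := by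
  simp [bern, bernsteinPolynomial]

lemma bern_nonneg (n i : ℕ) {x : ℝ} (hx : x ∈ Set.Icc (0 : ℝ) 1) : 0 ≤ bern n i x := by
  have h0 : 0 ≤ x := hx.1
  have h1 : 0 ≤ 1 - x := sub_nonneg.2 hx.2
  unfold bern
  positivity

lemma sum_bern (n : ℕ) (x : ℝ) : ∑ k ∈ range (n + 1), bern n k x = 1 := by
  simp only [bern_eq_eval, ← Polynomial.eval_finsetSum, bernsteinPolynomial.sum, Polynomial.eval_one]

open Polynomial in
lemma derivative_sum_range_bernsteinPolynomial (R : Type*) [CommRing R] (n k : ℕ) :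
    derivative (∑ j ∈ range (k + 1), bernsteinPolynomial R n j)
      = -(n * bernsteinPolynomial R (n - 1) k) := by
  induction k with
  | zero => simp [bernsteinPolynomial.derivative_zero]
  | succ k ih =>
    rw [sum_range_succ, derivative_add, ih, bernsteinPolynomial.derivative_succ]
    ring

lemma antitoneOn_sum_range_bern (n k : ℕ) :
    AntitoneOn (fun x => ∑ j ∈ range (k + 1), bern n j x) (Set.Icc 0 1) := by
  set P := ∑ j ∈ range (k + 1), bernsteinPolynomial ℝ n j
  have hP : (fun x => ∑ j ∈ range (k + 1), bern n j x) = fun x => P.eval x := by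
    ext x
    simp only [P, bern_eq_eval, Polynomial.eval_finsetSum]
  rw [hP]
  refine antitoneOn_of_deriv_nonpos (convex_Icc 0 1) P.continuousOn P.differentiableOn ?_
  intro x hx
  rw [interior_Icc] at hx
  rw [Polynomial.deriv, derivative_sum_range_bernsteinPolynomial]
  simp only [Polynomial.eval_neg, Polynomial.eval_mul, Polynomial.eval_natCast, ← bern_eq_eval,
    neg_nonpos]
  exact mul_nonneg n.cast_nonneg (bern_nonneg _ _ (Set.Ioo_subset_Icc_self hx))

lemma sum_range_mul_eq_of_sum_eq_zero {R : Type*} [CommRing R] {n : ℕ} {u : ℕ → R}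
    (hu : ∑ k ∈ range (n + 1), u k = 0) (φ : ℕ → R) :
    ∑ k ∈ range (n + 1), u k * φ k
      = ∑ k ∈ range n, (∑ j ∈ range (k + 1), u j) * (φ k - φ (k + 1)) := by
  have := sum_range_by_parts φ u (n + 1)
  simp only [smul_eq_mul, add_tsub_cancel_right, hu, mul_zero, zero_sub] at this
  rw [sum_congr rfl fun k _ => mul_comm (u k) (φ k), this, ← sum_neg_distrib]
  exact sum_congr rfl fun k _ => by ring

lemma bern_quadratic_nonneg {n : ℕ} {h : ℕ → ℝ} (hh : DiscreteConvexOn (2 * n) h) {a b : ℝ}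
    (ha : a ∈ Set.Icc (0 : ℝ) 1) (hb : b ∈ Set.Icc (0 : ℝ) 1) :
    0 ≤ ∑ k ∈ range (n + 1), ∑ l ∈ range (n + 1),
      (bern n k a - bern n k b) * (bern n l a - bern n l b) * h (k + l) := by
  set u : ℕ → ℝ := fun k => bern n k a - bern n k b
  set U : ℕ → ℝ := fun k => ∑ j ∈ range (k + 1), u j
  have hu : ∑ k ∈ range (n + 1), u k = 0 := by
    simp only [u, sum_sub_distrib, sum_bern, sub_self]
  -- the partial sums `U k` all have the sign of `b - a`
  have hU : ∀ k l, 0 ≤ U k * U l := by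
    have hU' : ∀ k, U k = ∑ j ∈ range (k + 1), bern n j a - ∑ j ∈ range (k + 1), bern n j b :=
      fun k => sum_sub_distrib ..
    intro k l
    rcases le_total a b with hab | hab
    · exact mul_nonneg (by simpa [hU'] using antitoneOn_sum_range_bern n k ha hb hab)
        (by simpa [hU'] using antitoneOn_sum_range_bern n l ha hb hab)
    · exact mul_nonneg_of_nonpos_of_nonpos
        (by simpa [hU'] using antitoneOn_sum_range_bern n k hb ha hab)
        (by simpa [hU'] using antitoneOn_sum_range_bern n l hb ha hab)
  have hsum : ∑ k ∈ range (n + 1), ∑ l ∈ range (n + 1), u k * u l * h (k + l)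
      = ∑ k ∈ range n, ∑ l ∈ range n,
          U k * U l * (h (k + l) - 2 * h (k + l + 1) + h (k + l + 2)) := by
    calc _ = ∑ k ∈ range (n + 1), u k * ∑ l ∈ range (n + 1), u l * h (k + l) := by
          simp only [mul_sum, mul_assoc]
      _ = ∑ k ∈ range n, U k * ∑ l ∈ range (n + 1), u l * (h (k + l) - h (k + l + 1)) := by
          rw [sum_range_mul_eq_of_sum_eq_zero hu]
          refine sum_congr rfl fun k _ => ?_
          simp only [U, ← sum_sub_distrib, ← mul_sub, add_right_comm k 1]
      _ = _ := by
          refine sum_congr rfl fun k _ => ?_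
          rw [sum_range_mul_eq_of_sum_eq_zero hu, mul_sum]
          refine sum_congr rfl fun l _ => ?_
          simp only [U, ← add_assoc]
          ring
  rw [hsum]
  refine sum_nonneg fun k hk => sum_nonneg fun l hl => mul_nonneg (hU k l) ?_
  have := hh (k + l) (by simp only [mem_range] at hk hl; omega)
  linarith

def bernsteinShift (n : ℕ) (y : ℝ) (g : ℕ → ℝ) (j : ℕ) : ℝ :=
  ∑ k ∈ range (n + 1), bern n k y * g (j + k)

instance (n : ℕ) : LeftCommutative (bernsteinShift n) where
  left_comm y z g := by
    funext j
    simp only [bernsteinShift, mul_sum]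
    rw [sum_comm]
    refine sum_congr rfl fun k _ => sum_congr rfl fun l _ => ?_
    rw [add_right_comm]
    ring

/-- `bernsteinMean n g {y₁, …, y_m}` is the expectation of `g (X₁ + ⋯ + X_m)` for independent
`X_l ∼ Bin(n, y_l)`. -/
def bernsteinMean (n : ℕ) (g : ℕ → ℝ) (s : Multiset ℝ) : ℝ :=
  s.foldr (bernsteinShift n) g 0

lemma DiscreteConvexOn.foldr_bernsteinShift {n : ℕ} {g : ℕ → ℝ} {s : Multiset ℝ}
    (hs : ∀ y ∈ s, y ∈ Set.Icc (0 : ℝ) 1) {N : ℕ} (hg : DiscreteConvexOn (N + n * s.card) g) :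
    DiscreteConvexOn N (s.foldr (bernsteinShift n) g) := by
  induction s using Multiset.induction_on generalizing N with
  | empty => simpa using hg
  | cons y s ih =>
    rw [Multiset.foldr_cons]
    refine DiscreteConvexOn.sum_mul_shift (ih (fun z hz => hs z (Multiset.mem_cons_of_mem hz)) ?_)
      fun k => bern_nonneg n k (hs y (Multiset.mem_cons_self y s))
    rwa [Multiset.card_cons, mul_add_one, ← add_assoc, add_right_comm] at hg

lemma bernsteinShift_bernsteinShift_zero (n : ℕ) (a b : ℝ) (h : ℕ → ℝ) :
    bernsteinShift n a (bernsteinShift n b h) 0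
      = ∑ k ∈ range (n + 1), ∑ l ∈ range (n + 1), bern n k a * bern n l b * h (k + l) := by
  simp only [bernsteinShift, zero_add, mul_sum, mul_assoc]

def DiagDominantOn {α : Type*} (S : Set α) (m : ℕ) (E : Multiset α → ℝ) : Prop :=
  ∀ a ∈ S, ∀ b ∈ S, ∀ w : Multiset α, (∀ v ∈ w, v ∈ S) → w.card + 2 = m →
    2 * E (a ::ₘ b ::ₘ w) ≤ E (a ::ₘ a ::ₘ w) + E (b ::ₘ b ::ₘ w)

lemma diagDominantOn_bernsteinMean {m n : ℕ} {g : ℕ → ℝ} (hg : DiscreteConvexOn (m * n) g) :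
    DiagDominantOn (Set.Icc 0 1) m (bernsteinMean n g) := by
  intro a ha b hb w hw hm
  set h := w.foldr (bernsteinShift n) g
  have hh : DiscreteConvexOn (2 * n) h :=
    DiscreteConvexOn.foldr_bernsteinShift hw (by rwa [← hm, add_mul, mul_comm, add_comm] at hg)
  have hexpand : ∀ c d, bernsteinMean n g (c ::ₘ d ::ₘ w)
      = ∑ k ∈ range (n + 1), ∑ l ∈ range (n + 1), bern n k c * bern n l d * h (k + l) :=
    fun c d => by
      rw [bernsteinMean, Multiset.foldr_cons, Multiset.foldr_cons, bernsteinShift_bernsteinShift_zero]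
  have hswap : bernsteinMean n g (a ::ₘ b ::ₘ w) = bernsteinMean n g (b ::ₘ a ::ₘ w) := by
    rw [Multiset.cons_swap]
  have hquad := bern_quadratic_nonneg hh ha hb
  have : ∑ k ∈ range (n + 1), ∑ l ∈ range (n + 1),
      (bern n k a - bern n k b) * (bern n l a - bern n l b) * h (k + l)
      = bernsteinMean n g (a ::ₘ a ::ₘ w) + bernsteinMean n g (b ::ₘ b ::ₘ w)
        - bernsteinMean n g (a ::ₘ b ::ₘ w) - bernsteinMean n g (b ::ₘ a ::ₘ w) := by
    simp only [hexpand, ← sum_add_distrib, ← sum_sub_distrib]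
    exact sum_congr rfl fun k _ => sum_congr rfl fun l _ => by ring
  linarith

namespace DiagDominantOn

variable {α : Type*} {S : Set α} {m : ℕ} {E : Multiset α → ℝ}

open Multiset

lemma succ_mul_le (hE : DiagDominantOn S m E) {a b : α} (ha : a ∈ S) (hb : b ∈ S)
    {z : Multiset α} (hz : ∀ v ∈ z, v ∈ S) {t : ℕ} (hm : t + 1 + card z = m) :
    (t + 1) * E (a ::ₘ (replicate t b + z))
      ≤ t * E (replicate (t + 1) b + z) + E (replicate (t + 1) a + z) := by
  set u : ℕ → ℝ := fun k => E (replicate k a + replicate (t + 1 - k) b + z)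
  have hu : DiscreteConvexOn (t + 1) u := by
    intro k hk
    obtain ⟨j, hj⟩ : ∃ j, t + 1 - k = j + 2 := ⟨t + 1 - k - 2, by omega⟩
    set w := replicate k a + replicate j b + z
    have hw : ∀ v ∈ w, v ∈ S := by
      simp only [w, mem_add, mem_replicate]
      rintro v ((⟨-, rfl⟩ | ⟨-, rfl⟩) | hv)
      exacts [ha, hb, hz v hv]
    have hcard : card w + 2 = m := by simp only [w, card_add, card_replicate]; omega
    have h0 : u k = E (b ::ₘ b ::ₘ w) := by
      simp only [u, w, hj, replicate_succ, add_cons, cons_add]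
    have h1 : u (k + 1) = E (a ::ₘ b ::ₘ w) := by
      simp only [u, w, show t + 1 - (k + 1) = j + 1 by omega, replicate_succ, add_cons, cons_add]
      exact congrArg E (cons_swap _ _ _)
    have h2 : u (k + 2) = E (a ::ₘ a ::ₘ w) := by
      simp only [u, w, show t + 1 - (k + 2) = j by omega, replicate_succ, cons_add]
    have := hE a ha b hb w hw hcard
    rw [h0, h1, h2]
    linarith
  simpa only [u, replicate_zero, zero_add, Nat.sub_zero, Nat.sub_self, add_zero,
    Nat.add_sub_cancel, replicate_one, Multiset.singleton_add, cons_add] using hu.succ_mul_le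

lemma card_mul_le_sum (hE : DiagDominantOn S m E) {ys zs : Multiset α}
    (hys : ∀ v ∈ ys, v ∈ S) (hzs : ∀ v ∈ zs, v ∈ S) (hm : card ys + card zs = m) :
    card ys * E (ys + zs) ≤ (ys.map fun a => E (replicate (card ys) a + zs)).sum := by
  induction ys using Multiset.induction_on generalizing zs with
  | empty => simp
  | cons y ys ih =>
    have hy : y ∈ S := hys y (mem_cons_self y ys)
    have hys' : ∀ v ∈ ys, v ∈ S := fun v hv => hys v (mem_cons_of_mem hv)
    have hyzs : ∀ v ∈ y ::ₘ zs, v ∈ S := by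
      simp only [Multiset.mem_cons]
      rintro v (rfl | hv)
      exacts [hy, hzs v hv]
    simp only [Multiset.card_cons, Multiset.map_cons, Multiset.sum_cons, cons_add] at hm ⊢
    rcases (card ys).eq_zero_or_pos with h0 | hpos
    · simp [card_eq_zero.1 h0]
    have hih := ih hys' hyzs (by rw [Multiset.card_cons]; omega)
    have hline : ∀ a ∈ ys, (card ys + 1) * E (y ::ₘ (replicate (card ys) a + zs))
        ≤ card ys * E (replicate (card ys + 1) a + zs) + E (replicate (card ys + 1) y + zs) :=
      fun a ha => by exact_mod_cast hE.succ_mul_le hy (hys' a ha) hzs (by omega)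
    have hsum := sum_map_le_sum_map _ _ hline
    simp only [add_cons, sum_map_mul_left, sum_map_add, map_const', sum_replicate,
      nsmul_eq_mul] at hih hsum
    have : (card ys : ℝ) * ((card ys + 1) * E (y ::ₘ (ys + zs)))
        ≤ card ys * (E (replicate (card ys + 1) y + zs)
          + (ys.map fun a => E (replicate (card ys + 1) a + zs)).sum) := by
      nlinarith
    push_cast
    exact le_of_mul_le_mul_left this (by exact_mod_cast hpos)

end DiagDominantOn

lemma sum_piFinset_fin_succ {β R : Type*} [AddCommMonoid R] {M : ℕ} (s : Finset β)
    (F : (Fin (M + 1) → β) → R) :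
    ∑ i ∈ Fintype.piFinset (fun _ : Fin (M + 1) => s), F i
      = ∑ k ∈ s, ∑ i ∈ Fintype.piFinset (fun _ : Fin M => s), F (Fin.cons k i) := by
  have := filter_piFinset_eq_map_consEquiv (fun _ : Fin (M + 1) => s) fun _ => True
  simp only [filter_true] at this
  rw [this, sum_map, sum_product]
  rfl

lemma sum_piFinset_prod_bern_mul (n : ℕ) (g : ℕ → ℝ) {M : ℕ} (y : Fin M → ℝ) (j : ℕ) :
    ∑ i ∈ Fintype.piFinset (fun _ : Fin M => range (n + 1)),
        (∏ l, bern n (i l) (y l)) * g (j + ∑ l, i l)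
      = (List.ofFn y).foldr (bernsteinShift n) g j := by
  induction M generalizing j with
  | zero => simp
  | succ M ih =>
    rw [sum_piFinset_fin_succ, List.ofFn_succ, List.foldr_cons, bernsteinShift]
    refine sum_congr rfl fun k _ => ?_
    rw [← ih (fun l => y l.succ) (j + k), mul_sum]
    refine sum_congr rfl fun i _ => ?_
    simp only [Fin.prod_univ_succ, Fin.sum_univ_succ, Fin.cons_zero, Fin.cons_succ, add_assoc]
    ring

theorem rasa_inequality_general_general (m n : ℕ)
    (f : ℝ → ℝ) (hconv : ConvexOn ℝ (Set.Icc 0 1) f)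
    (x : Fin m → ℝ) (hx : ∀ j, x j ∈ Set.Icc (0:ℝ) 1) :
    0 ≤ ∑ i ∈ Fintype.piFinset (fun _ : Fin m => range (n + 1)),
        ((∑ j : Fin m, ∏ l : Fin m, bern n (i l) (x j))
            - m * ∏ l : Fin m, bern n (i l) (x l))
          * f ((∑ l : Fin m, (i l : ℝ)) / (m * n)) := by
  set E := bernsteinMean n fun k => f (k / (m * n : ℕ))
  have hmean : ∀ y : Fin m → ℝ, ∑ i ∈ Fintype.piFinset (fun _ : Fin m => range (n + 1)),
      (∏ l, bern n (i l) (y l)) * f ((∑ l : Fin m, (i l : ℝ)) / (m * n)) = E (List.ofFn y) :=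
    fun y => by
      simp only [E, bernsteinMean, Multiset.coe_foldr, ← sum_piFinset_prod_bern_mul]
      simp only [zero_add, Nat.cast_sum, Nat.cast_mul]
  have key : (m : ℝ) * E (List.ofFn x) ≤ ∑ j, E (List.ofFn fun _ : Fin m => x j) := by
    have hx' : ∀ v ∈ (List.ofFn x : Multiset ℝ), v ∈ Set.Icc (0 : ℝ) 1 := by
      simpa [List.mem_ofFn] using hx
    simpa [E, List.ofFn_const, List.sum_ofFn, Multiset.coe_replicate] using
      (diagDominantOn_bernsteinMean (DiscreteConvexOn.of_convexOn hconv (m * n))).card_mul_le_sum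
        hx' (zs := 0) (by simp) (by simp)
  have hdiag := fun j => hmean fun _ => x j
  simp only [sub_mul, sum_sub_distrib, sum_mul, mul_assoc, ← mul_sum]
  rw [sum_comm, hmean x]
  simp only [hdiag]
  linarith

/-- The `m`-variable generalization of Raşa's inequality. -/
theorem rasa_inequality_general (m n : ℕ) (hm : 2 ≤ m) (hn : 1 ≤ n)
    (f : ℝ → ℝ) (hconv : ConvexOn ℝ (Set.Icc 0 1) f)
    (hcont : ContinuousOn f (Set.Icc 0 1))
    (x : Fin m → ℝ) (hx : ∀ j, x j ∈ Set.Icc (0:ℝ) 1) :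
    0 ≤ ∑ i ∈ Fintype.piFinset (fun _ : Fin m => range (n + 1)),
        ((∑ j : Fin m, ∏ l : Fin m, bern n (i l) (x j))
            - m * ∏ l : Fin m, bern n (i l) (x l))
          * f ((∑ l : Fin m, (i l : ℝ)) / (m * n)) :=
  rasa_inequality_general_general m n f hconv x hx
end
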